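/- arXiv:2310.00493 — 10 statements merged into one kernel-verified Lean document; each statement's English description precedes it below -/
import Mathlib

section
/- Let C be a category with a terminal object 1 that is well-pointed, i.e., for every pair of morphisms f, g : A → B with f ≠ g there exists p : 1 → A with f ∘ p ≠ g ∘ p. If C carries a monoidal structure with tensor ⊗ and unit object I, then the unique morphism I → 1 is a monomorphism. -/
/-!
Both unitors agree on `𝟙_ C`, so for points `x y` of the unit the morphism `x ⊗ y` yields
`(x ▷ 1) ≫ λ ≫ y = (1 ◁ y) ≫ ρ ≫ x` as maps `1 ⊗ 1 ⟶ 𝟙_ C`, where `1` is terminal. Precomposing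
with any `1 ⟶ 1 ⊗ 1` turns both prefixes into endomorphisms of `1`, i.e. identities, so `x = y`.
Thus the unit has at most one global point, and in a well-pointed category every morphism out of
such an object is mono.
-/

open CategoryTheory CategoryTheory.Limits MonoidalCategory

namespace CategoryTheory.MonoidalCategory

variable {C : Type u} [Category.{v} C] [MonoidalCategory C]

lemma whiskerRight_leftUnitor_comp_eq_whiskerLeft_rightUnitor_comp {X Y : C}
    (x : X ⟶ 𝟙_ C) (y : Y ⟶ 𝟙_ C) :
    x ▷ Y ≫ (λ_ Y).hom ≫ y = X ◁ y ≫ (ρ_ X).hom ≫ x := by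
  calc x ▷ Y ≫ (λ_ Y).hom ≫ y = (x ⊗ₘ y) ≫ (λ_ (𝟙_ C)).hom := by
        rw [tensorHom_def, Category.assoc, leftUnitor_naturality]
    _ = (x ⊗ₘ y) ≫ (ρ_ (𝟙_ C)).hom := by rw [unitors_equal]
    _ = X ◁ y ≫ (ρ_ X).hom ≫ x := by
        rw [tensorHom_def', Category.assoc, rightUnitor_naturality]

instance subsingleton_terminal_hom_unit [HasTerminal C] : Subsingleton (⊤_ C ⟶ 𝟙_ C) := by
  refine ⟨fun x y => ?_⟩
  let s : ⊤_ C ⟶ (⊤_ C) ⊗ (⊤_ C) := (λ_ (⊤_ C)).inv ≫ terminal.from (𝟙_ C) ▷ (⊤_ C)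
  have hx : s ≫ (⊤_ C) ◁ y ≫ (ρ_ (⊤_ C)).hom = 𝟙 _ := Subsingleton.elim _ _
  have hy : s ≫ x ▷ (⊤_ C) ≫ (λ_ (⊤_ C)).hom = 𝟙 _ := Subsingleton.elim _ _
  calc x = s ≫ (⊤_ C) ◁ y ≫ (ρ_ (⊤_ C)).hom ≫ x := ((reassoc_of% hx) x).symm
    _ = s ≫ x ▷ (⊤_ C) ≫ (λ_ (⊤_ C)).hom ≫ y := by
        rw [whiskerRight_leftUnitor_comp_eq_whiskerLeft_rightUnitor_comp]
    _ = y := (reassoc_of% hy) y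

end CategoryTheory.MonoidalCategory

/-- If `C` is a well-pointed category (equality of morphisms is detected by global
points of the domain) carrying a monoidal structure with unit `I = 𝟙_ C`, then the
unique morphism from the unit to the terminal object is a monomorphism. -/
theorem unit_to_terminal_mono {C : Type u} [Category.{v} C] [MonoidalCategory C]
    [HasTerminal C]
    (well_pointed : ∀ {A B : C} (f g : A ⟶ B), f ≠ g → ∃ p : ⊤_ C ⟶ A, p ≫ f ≠ p ≫ g) :
    Mono (terminal.from (𝟙_ C)) := by
  refine ⟨fun f g _ => ?_⟩
  by_contra hne
  obtain ⟨p, hp⟩ := well_pointed f g hne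
  exact hp (Subsingleton.elim _ _)
end

section
/- Every closed symmetric monoidal structure on the category Set of sets has unit isomorphic to the one-element set, and its tensor product functor is naturally isomorphic to the cartesian product of sets. -/
open CategoryTheory MonoidalCategory

universe u

/-- The cartesian product, as a functor `Type u × Type u ⥤ Type u`. -/
def cartesianProductFunctor : Type u × Type u ⥤ Type u where
  obj p := p.1 × p.2
  map f := TypeCat.ofHom fun x => (f.1 x.1, f.2 x.2)
  map_id := fun _ => rfl
  map_comp := fun _ _ => rfl

/-!
As a left adjoint, `X ⊗ -` preserves coproducts, and every set `Y` is the coproduct of `Y` copies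
of any one-element set `T`; hence `(y, t) ↦ (X ◁ const y) t` is a bijection `Y × (X ⊗ T) ≃ X ⊗ Y`.
For `X = T = PUnit` and `Y = 𝟙_` the right unitor turns this into `𝟙_ × (PUnit ⊗ PUnit) ≃ PUnit`,
so the unit is a singleton. Taking `T = 𝟙_` instead and composing with `ρ_ X` gives the bijection
`X × Y ≃ X ⊗ Y`, `(x, y) ↦ (X ◁ const y) ((ρ_ X).inv x)`, which is natural in `X` and `Y`.
-/

open Limits

lemma nonempty_unique_of_prod_equiv_punit {α β : Type*} (e : α × β ≃ PUnit) :
    Nonempty (Unique α) := by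
  obtain ⟨a, b⟩ := e.symm PUnit.unit
  refine ⟨{ default := a, uniq := fun a' => ?_ }⟩
  exact congrArg Prod.fst (e.injective (Subsingleton.elim (e (a', b)) (e (a, b))))

namespace CategoryTheory.Types

lemma isColimit_cofan_const (T Y : Type u) [Unique T] :
    Nonempty (IsColimit (Cofan.mk Y fun y : Y => TypeCat.ofHom fun _ : T => y)) := by
  rw [Cofan.nonempty_isColimit_iff_bijective_fromSigma]
  refine ⟨fun ⟨_, t⟩ ⟨_, t'⟩ h => ?_, fun y => ⟨⟨y, default⟩, rfl⟩⟩
  cases h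
  rw [Subsingleton.elim t t']

lemma bijective_map_const (F : Type u ⥤ Type u) (T Y : Type u) [Unique T]
    [PreservesColimitsOfShape (Discrete Y) F] :
    Function.Bijective fun p : Y × F.obj T => F.map (TypeCat.ofHom fun _ => p.1) p.2 := by
  obtain ⟨hY⟩ := isColimit_cofan_const T Y
  have hFY := (Cofan.nonempty_isColimit_iff_bijective_fromSigma _).mp
    ⟨isColimitCofanMkObjOfIsColimit F _ _ hY⟩
  exact hFY.comp (Equiv.sigmaEquivProd _ _).symm.bijective

end CategoryTheory.Types

section

variable [MonoidalCategory (Type u)]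

lemma nonempty_unique_tensorUnit [MonoidalClosed (Type u)] : Nonempty (Unique (𝟙_ (Type u))) :=
  nonempty_unique_of_prod_equiv_punit <|
    (Equiv.ofBijective _ (Types.bijective_map_const (tensorLeft PUnit) PUnit _)).trans
      (ρ_ PUnit.{u + 1}).toEquiv

def tensorPairing (X Y : Type u) (p : X × Y) : (X ⊗ Y : Type u) :=
  (X ◁ TypeCat.ofHom fun _ => p.2) ((ρ_ X).inv p.1)

lemma tensorPairing_naturality {X X' Y Y' : Type u} (f : X ⟶ X') (g : Y ⟶ Y') (p : X × Y) :
    (f ⊗ₘ g) (tensorPairing X Y p) = tensorPairing X' Y' (f p.1, g p.2) := by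
  have h : (ρ_ X).inv ≫ X ◁ (TypeCat.ofHom fun _ => p.2) ≫ (f ⊗ₘ g) =
      f ≫ (ρ_ X').inv ≫ X' ◁ ((TypeCat.ofHom fun _ => p.2) ≫ g) := by
    rw [MonoidalCategory.tensorHom_def, whisker_exchange_assoc, ← rightUnitor_inv_naturality_assoc,
      whiskerLeft_comp]
  exact types_congr_hom h p.1

lemma tensorPairing_bijective [MonoidalClosed (Type u)] (X Y : Type u) :
    Function.Bijective (tensorPairing X Y) := by
  obtain ⟨_⟩ := nonempty_unique_tensorUnit.{u}
  exact (Types.bijective_map_const (tensorLeft X) _ Y).comp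
    ((ρ_ X).toEquiv.symm.prodCongr (Equiv.refl Y) |>.trans (Equiv.prodComm _ _)).bijective

noncomputable def cartesianProductIsoTensor [MonoidalClosed (Type u)] :
    cartesianProductFunctor ≅ tensor (Type u) :=
  NatIso.ofComponents (fun p => (Equiv.ofBijective _ (tensorPairing_bijective p.1 p.2)).toIso)
    fun fg => by ext p; exact (tensorPairing_naturality fg.1 fg.2 p).symm

end

/-- Every closed symmetric monoidal structure on the category `Set` (= `Type u`) of sets
has unit isomorphic to the one-element set, and its tensor product functor is (naturally)
isomorphic to the cartesian product functor. -/
theorem closed_symmetric_monoidal_on_type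
    (M : MonoidalCategory (Type u))
    (_ : @MonoidalClosed (Type u) _ M) :
    Nonempty ((@MonoidalCategoryStruct.tensorUnit (Type u) _ M.toMonoidalCategoryStruct)
        ≅ PUnit.{u + 1}) ∧
    Nonempty ((@MonoidalCategory.tensor (Type u) _ M) ≅ cartesianProductFunctor.{u}) := by
  obtain ⟨_⟩ := nonempty_unique_tensorUnit.{u}
  exact ⟨⟨(Equiv.equivPUnit _).toIso⟩, ⟨cartesianProductIsoTensor.symm⟩⟩
end

section
/- Let C be a small category, Ĉ = Set^{C^op}, and let 𝒞 be a reflective full subcategory of Ĉ with inclusion i through which the Yoneda embedding factors via ŷ : C → 𝒞. If ⊗ : 𝒞 × 𝒞 → 𝒞 is the tensor product of a closed symmetric monoidal structure on 𝒞, then ⊗ is naturally isomorphic to the left Kan extension of ⊗ ∘ (ŷ × ŷ) : C × C → 𝒞 along ŷ × ŷ : C × C → 𝒞 × 𝒞. -/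
/-!
The functor `ŷ` is dense: every object `d` of `𝒞` is the canonical colimit of the `ŷ c` mapping
to it, because `i` is fully faithful (so reflects colimits) and sends this diagram to the
canonical colimit of representables over `i d`. A functor out of `𝒞` preserving these colimits is
therefore the left Kan extension of its restriction along `ŷ`. Closedness and symmetry make
`a ⊗ -` and `- ⊗ a` left adjoints, so `⊗` is cocontinuous in each variable separately; extending
one variable at a time, first along `𝟭 × ŷ` and then along `ŷ × 𝟭`, exhibits `⊗` as the left Kan
extension of its restriction along `ŷ × ŷ`.
-/

open CategoryTheory MonoidalCategory Limits
open scoped Prod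

namespace CategoryTheory.Functor

universe v₁ v₂ v₃ v₄ u₁ u₂ u₃ u₄

variable {A : Type u₄} {C : Type u₁} {D : Type u₂} {E : Type u₃}
  [Category.{v₄} A] [Category.{v₁} C] [Category.{v₂} D] [Category.{v₃} E]

lemma isLeftKanExtension_id_iff_bijective (K : C ⥤ D) (F : D ⥤ E) :
    F.IsLeftKanExtension (𝟙 (K ⋙ F)) ↔
      ∀ G : D ⥤ E, Function.Bijective (fun β : F ⟶ G => whiskerLeft K β) := by
  constructor
  · intro _ G
    convert (homEquivOfIsLeftKanExtension F (𝟙 (K ⋙ F)) G).bijective using 1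
    ext β : 1
    exact (Category.id_comp _).symm
  · intro h
    refine ⟨⟨IsInitial.ofUniqueHom
      (fun G => StructuredArrow.homMk ((h G.right).2 G.hom).choose ?_) (fun G m => ?_)⟩⟩
    · exact (Category.id_comp _).trans ((h G.right).2 G.hom).choose_spec
    · ext1
      apply (h G.right).1
      exact ((Category.id_comp _).symm.trans (StructuredArrow.w m)).trans
        ((h G.right).2 G.hom).choose_spec.symm

lemma isLeftKanExtension_id_comp {C' : Type*} [Category C'] (L₁ : C' ⥤ C) (L₂ : C ⥤ D)
    (F : D ⥤ E) (h₂ : F.IsLeftKanExtension (𝟙 (L₂ ⋙ F)))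
    (h₁ : (L₂ ⋙ F).IsLeftKanExtension (𝟙 (L₁ ⋙ L₂ ⋙ F))) :
    F.IsLeftKanExtension (𝟙 ((L₁ ⋙ L₂) ⋙ F)) := by
  rw [isLeftKanExtension_id_iff_bijective] at h₁ h₂ ⊢
  exact fun G => (h₁ (L₂ ⋙ G)).comp (h₂ G)

lemma IsDense.of_comp_fullyFaithful (F : C ⥤ D) (G : D ⥤ E) [G.Full] [G.Faithful]
    [(F ⋙ G).IsDense] : F.IsDense where
  isDenseAt Y := ⟨isColimitOfReflects G <|
    (((F ⋙ G).denseAt (G.obj Y)).whiskerEquivalence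
      (CostructuredArrow.post F G Y).asEquivalence).ofIsoColimit
    (Cocone.ext (Iso.refl _) fun j => by
      change (𝟙 _ ≫ G.map j.hom) ≫ 𝟙 _ = G.map (𝟙 _ ≫ j.hom)
      simp)⟩

lemma isLeftKanExtension_id_of_isDense (K : C ⥤ D) [K.IsDense] (F : D ⥤ E)
    [PreservesColimitsOfSize.{v₁, max u₁ v₂} F] : F.IsLeftKanExtension (𝟙 (K ⋙ F)) :=
  LeftExtension.IsPointwiseLeftKanExtension.isLeftKanExtension (E := LeftExtension.mk F _)
    fun Y => (isColimitOfPreserves F (K.denseAt Y)).ofIsoColimit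
      (Cocone.ext (Iso.refl _) fun j => by
        change F.map (𝟙 _ ≫ j.hom) ≫ 𝟙 _ = 𝟙 _ ≫ F.map j.hom
        simp)

lemma isLeftKanExtension_id_id_prod (K : C ⥤ D) (M : A × D ⥤ E)
    (hM : ∀ a, ((curry.obj M).obj a).IsLeftKanExtension (𝟙 (K ⋙ (curry.obj M).obj a))) :
    M.IsLeftKanExtension (𝟙 ((𝟭 A).prod K ⋙ M)) := by
  refine (isLeftKanExtension_id_iff_bijective _ _).2 fun G => ⟨fun β₁ β₂ h => ?_, fun γ => ?_⟩
  · ext ⟨a, d⟩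
    refine congr_app (((curry.obj M).obj a).hom_ext_of_isLeftKanExtension
      (𝟙 (K ⋙ (curry.obj M).obj a)) ((curry.map β₁).app a) ((curry.map β₂).app a) ?_) d
    ext c
    simpa using congr_app h (a, c)
  · let δ a := ((curry.obj M).obj a).descOfIsLeftKanExtension (𝟙 _) ((curry.obj G).obj a)
      ((curry.map γ).app a)
    have hδ (a : A) (c : C) : (δ a).app (K.obj c) = γ.app (a, c) := by
      simpa using descOfIsLeftKanExtension_fac_app _ (𝟙 (K ⋙ (curry.obj M).obj a))
        ((curry.obj G).obj a) ((curry.map γ).app a) c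
    let Γ : curry.obj M ⟶ curry.obj G :=
      { app := δ
        naturality a a' f := ((curry.obj M).obj a).hom_ext_of_isLeftKanExtension
          (𝟙 (K ⋙ (curry.obj M).obj a)) _ _ (by
            ext c
            simpa [hδ] using γ.naturality (f ×ₘ 𝟙 c)) }
    refine ⟨curry.preimage Γ, ?_⟩
    ext ⟨a, c⟩
    have := congr_app (congr_app (curry.map_preimage Γ) a) (K.obj c)
    rw [curry_map_app_app] at this
    exact this.trans (hδ a c)

-- `Prod.swap` is an involution on the nose, so whiskering by it is its own inverse.
lemma bijective_whiskerLeft_swap (M G : A × D ⥤ E) :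
    Function.Bijective (fun β : M ⟶ G => whiskerLeft (Prod.swap D A) β) :=
  Function.bijective_iff_has_inverse.2
    ⟨fun β => whiskerLeft (Prod.swap A D) β, fun _ => rfl, fun _ => rfl⟩

lemma isLeftKanExtension_id_swap (K : C ⥤ D) (N : A × D ⥤ E)
    (h : N.IsLeftKanExtension (𝟙 ((𝟭 A).prod K ⋙ N))) :
    (Prod.swap D A ⋙ N).IsLeftKanExtension (𝟙 (K.prod (𝟭 A) ⋙ Prod.swap D A ⋙ N)) := by
  rw [isLeftKanExtension_id_iff_bijective] at h ⊢
  exact fun G => ((bijective_whiskerLeft_swap _ _).comp (h (Prod.swap A D ⋙ G))).comp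
    (bijective_whiskerLeft_swap (Prod.swap D A ⋙ N) G)

theorem isLeftKanExtension_id_prod_of_isDense (K : C ⥤ D) [K.IsDense] (M : D × D ⥤ E)
    [∀ a, PreservesColimitsOfSize.{v₁, max u₁ v₂} ((curry.obj M).obj a)]
    [∀ b, PreservesColimitsOfSize.{v₁, max u₁ v₂} ((curry.obj M).flip.obj b)] :
    M.IsLeftKanExtension (𝟙 (K.prod K ⋙ M)) := by
  have hsnd : M.IsLeftKanExtension (𝟙 ((𝟭 D).prod K ⋙ M)) :=
    isLeftKanExtension_id_id_prod K M fun a => isLeftKanExtension_id_of_isDense K _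
  have hfst : ((𝟭 D).prod K ⋙ M).IsLeftKanExtension
      (𝟙 (K.prod (𝟭 C) ⋙ (𝟭 D).prod K ⋙ M)) := by
    -- `(𝟭 D).prod K ⋙ M` is `Prod.swap D C ⋙ N` on the nose, where `N c d = M (d, K c)`.
    refine isLeftKanExtension_id_swap K (Prod.swap C D ⋙ (𝟭 D).prod K ⋙ M)
      (isLeftKanExtension_id_id_prod K _ fun c => ?_)
    have : PreservesColimitsOfSize.{v₁, max u₁ v₂}
        ((curry.obj (Prod.swap C D ⋙ (𝟭 D).prod K ⋙ M)).obj c) :=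
      preservesColimits_of_natIso
        (NatIso.ofComponents (F := (curry.obj M).flip.obj (K.obj c)) (fun _ => Iso.refl _))
    exact isLeftKanExtension_id_of_isDense K _
  exact isLeftKanExtension_id_comp (K.prod (𝟭 C)) ((𝟭 D).prod K) M hsnd hfst

end CategoryTheory.Functor

/-- Let `C` be a small category, `Ĉ = Set^{Cᵒᵖ}`, and let `𝒞` (here `D`) be a reflective
full subcategory of `Ĉ` with inclusion `i` through which the Yoneda embedding factors as
`y = ŷ ⋙ i`.  If `⊗` is the tensor product of a closed symmetric monoidal structure on
`𝒞`, then `⊗ : 𝒞 × 𝒞 ⥤ 𝒞` is (naturally isomorphic to) the left Kan extension of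
`⊗ ∘ (ŷ × ŷ)` along `ŷ × ŷ`, i.e. `⊗` together with the identity natural transformation
on `(ŷ × ŷ) ⋙ ⊗` is a left Kan extension of `(ŷ × ŷ) ⋙ ⊗` along `ŷ × ŷ`. -/
theorem tensor_is_leftKanExtension {C : Type u} [SmallCategory C]
    {D : Type (u + 1)} [Category.{u} D]
    [MonoidalCategory D] [SymmetricCategory D] [MonoidalClosed D]
    (i : D ⥤ (Cᵒᵖ ⥤ Type u)) [Reflective i]
    (yhat : C ⥤ D) (hy : yhat ⋙ i = yoneda) :
    (MonoidalCategory.tensor D).IsLeftKanExtension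
      (𝟙 (yhat.prod yhat ⋙ MonoidalCategory.tensor D)) := by
  have : (yhat ⋙ i).IsDense := by rw [hy]; infer_instance
  have : yhat.IsDense := Functor.IsDense.of_comp_fullyFaithful yhat i
  have (a : D) : PreservesColimitsOfSize.{u, u} ((Functor.curry.obj (tensor D)).obj a) :=
    preservesColimits_of_natIso (NatIso.ofComponents (F := tensorLeft a) fun _ => Iso.refl _)
  have (b : D) : PreservesColimitsOfSize.{u, u} ((Functor.curry.obj (tensor D)).flip.obj b) :=
    preservesColimits_of_natIso (NatIso.ofComponents (F := tensorRight b) fun _ => Iso.refl _)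
  exact Functor.isLeftKanExtension_id_prod_of_isDense yhat (tensor D)
end

section
/- The unit object of any monoidal structure on the category Graph of reflexive graphs is isomorphic either to the empty graph ∅ or to the one-vertex graph I_0. -/
open CategoryTheory MonoidalCategory

/-- The category of (reflexive) graphs: an object is a set of vertices with an
irreflexive symmetric adjacency relation. -/
structure GraphCat : Type 1 where
  V : Type
  adj : V → V → Prop
  symm : ∀ {v w : V}, adj v w → adj w v
  loopless : ∀ v : V, ¬ adj v v

namespace GraphCat

/-- A graph map: whenever `v ∼ w`, either `f v = f w` or `f v ∼ f w`. -/
structure Hom (X Y : GraphCat) where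
  toFun : X.V → Y.V
  map_adj : ∀ {v w : X.V}, X.adj v w → toFun v = toFun w ∨ Y.adj (toFun v) (toFun w)

theorem Hom.ext' {X Y : GraphCat} {f g : Hom X Y} (h : f.toFun = g.toFun) : f = g := by
  cases f; cases g; cases h; rfl

instance : Category GraphCat where
  Hom := Hom
  id X := ⟨fun v => v, fun h => Or.inr h⟩
  comp f g := ⟨fun v => g.toFun (f.toFun v), fun {v w} h => by
    rcases f.map_adj h with h' | h'
    · exact Or.inl (congrArg g.toFun h')
    · exact g.map_adj h'⟩
  id_comp f := Hom.ext' rfl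
  comp_id f := Hom.ext' rfl
  assoc f g h := Hom.ext' rfl

/-- The one-vertex graph `I₀`. -/
def I0 : GraphCat := ⟨PUnit, fun _ _ => False, fun h => h, fun _ h => h⟩

/-- The graph `I₁` with two vertices `s = false` and `t = true` joined by an edge. -/
def I1 : GraphCat := ⟨Bool, fun v w => v ≠ w, Ne.symm, fun _ h => h rfl⟩

/-- The empty graph. -/
def emptyGraph : GraphCat := ⟨Empty, fun _ _ => False, fun h => h, fun _ h => h⟩

end GraphCat

open GraphCat

/-! Eckmann–Hilton: the endomorphisms of the monoidal unit commute. In `Graph` the constant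
endomorphisms `c_a`, `c_b` of a graph satisfy `c_a ≫ c_b = c_b` and `c_b ≫ c_a = c_a`, so they
commute only if `a = b`; hence the unit has at most one vertex. -/

namespace CategoryTheory.MonoidalCategory

theorem tensorUnit_endo_comm {C : Type*} [Category C] [MonoidalCategory C] (f g : 𝟙_ C ⟶ 𝟙_ C) :
    f ≫ g = g ≫ f := by
  rw [← cancel_epi (λ_ (𝟙_ C)).hom]
  calc (λ_ (𝟙_ C)).hom ≫ f ≫ g = (f ▷ 𝟙_ C ≫ 𝟙_ C ◁ g) ≫ (λ_ (𝟙_ C)).hom := by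
        rw [Category.assoc, leftUnitor_naturality, unitors_equal, rightUnitor_naturality_assoc]
    _ = (𝟙_ C ◁ g ≫ f ▷ 𝟙_ C) ≫ (λ_ (𝟙_ C)).hom := by rw [whisker_exchange]
    _ = (λ_ (𝟙_ C)).hom ≫ g ≫ f := by
        rw [Category.assoc, unitors_equal, rightUnitor_naturality, ← unitors_equal,
          leftUnitor_naturality_assoc]

end CategoryTheory.MonoidalCategory

namespace GraphCat

def const (X : GraphCat) {Y : GraphCat} (y : Y.V) : X ⟶ Y := ⟨fun _ => y, fun _ => Or.inl rfl⟩

theorem subsingleton_of_endo_comm {X : GraphCat} (h : ∀ f g : X ⟶ X, f ≫ g = g ≫ f) :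
    Subsingleton X.V :=
  ⟨fun a b => congrArg (fun f : X ⟶ X => f.toFun a) (h (X.const a) (X.const b)).symm⟩

def isoEmptyGraph (X : GraphCat) [IsEmpty X.V] : X ≅ emptyGraph where
  hom := ⟨isEmptyElim, fun {v} _ => isEmptyElim v⟩
  inv := ⟨Empty.elim, fun {v} _ => v.elim⟩
  hom_inv_id := Hom.ext' (funext isEmptyElim)
  inv_hom_id := Hom.ext' (funext fun e => e.elim)

def isoI0 {X : GraphCat} [Subsingleton X.V] (x : X.V) : X ≅ I0 where
  hom := X.const PUnit.unit
  inv := I0.const x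
  hom_inv_id := Hom.ext' (funext fun _ => Subsingleton.elim _ _)

end GraphCat

/-- The unit of any monoidal structure on the category of (reflexive) graphs is
isomorphic either to the empty graph or to the one-vertex graph `I₀`. -/
theorem monoidal_unit_graph [MonoidalCategory GraphCat] :
    Nonempty ((𝟙_ GraphCat) ≅ emptyGraph) ∨ Nonempty ((𝟙_ GraphCat) ≅ I0) := by
  have := subsingleton_of_endo_comm (tensorUnit_endo_comm (C := GraphCat))
  rcases isEmpty_or_nonempty (𝟙_ GraphCat).V with _ | ⟨⟨x⟩⟩
  · exact Or.inl ⟨isoEmptyGraph _⟩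
  · exact Or.inr ⟨isoI0 x⟩
end

section
/- The unit object of any closed monoidal structure on the category Graph of reflexive graphs is isomorphic to the one-vertex graph I_0. -/
open CategoryTheory MonoidalCategory

open GraphCat

section EckmannHilton

variable {C : Type*} [Category C] [MonoidalCategory C]

/-- Endomorphisms of the unit object of a monoidal category commute. -/
theorem end_unit_comm' (f g : 𝟙_ C ⟶ 𝟙_ C) : f ≫ g = g ≫ f := by
  have h : f ▷ (𝟙_ C) ≫ (𝟙_ C) ◁ g = (𝟙_ C) ◁ g ≫ f ▷ (𝟙_ C) :=
    (MonoidalCategory.tensorHom_def f g).symm.trans (MonoidalCategory.tensorHom_def' f g)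
  have h2 := congrArg (fun t => (λ_ (𝟙_ C)).inv ≫ t ≫ (λ_ (𝟙_ C)).hom) h
  simp only [Category.assoc] at h2
  rw [MonoidalCategory.unitors_equal] at h2
  simp at h2
  rw [← MonoidalCategory.unitors_equal] at h2
  simp at h2
  have e : ∀ {Z : C} (k : 𝟙_ C ⟶ Z), (ρ_ (𝟙_ C)).inv ≫ (λ_ (𝟙_ C)).hom ≫ k = k := by
    intro Z k
    rw [MonoidalCategory.unitors_equal, Iso.inv_hom_id_assoc]
  rw [e] at h2
  exact h2

end EckmannHilton

/-- The unit of any closed monoidal structure on the category of (reflexive) graphs is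
isomorphic to the one-vertex graph `I₀`. -/
theorem closed_monoidal_unit_graph [MonoidalCategory GraphCat] [MonoidalClosed GraphCat] :
    Nonempty ((𝟙_ GraphCat) ≅ I0) := by
  -- Step 1: the unit has at least one vertex (uses closedness).
  have hne : Nonempty (𝟙_ GraphCat).V := by
    by_contra hn
    rw [not_nonempty_iff] at hn
    let a : I0 ⟶ I1 := ⟨fun _ => false, fun h => h.elim⟩
    let b : I0 ⟶ I1 := ⟨fun _ => true, fun h => h.elim⟩
    have hab : a ≠ b := by
      intro e
      have := congrArg (fun k : I0 ⟶ I1 => Hom.toFun k PUnit.unit) e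
      simp [a, b] at this
    apply hab
    have hsub : MonoidalClosed.curry ((ρ_ I0).hom ≫ a) =
        MonoidalClosed.curry ((ρ_ I0).hom ≫ b) := by
      apply Hom.ext'
      funext x
      exact (hn.false x).elim
    have := MonoidalClosed.curry_injective hsub
    exact (Iso.cancel_iso_hom_left (ρ_ I0) a b).mp this
  -- Step 2: the unit has at most one vertex (Eckmann–Hilton).
  have huniq : ∀ u v : (𝟙_ GraphCat).V, u = v := by
    intro u v
    let cu : 𝟙_ GraphCat ⟶ 𝟙_ GraphCat := ⟨fun _ => u, fun _ => Or.inl rfl⟩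
    let cv : 𝟙_ GraphCat ⟶ 𝟙_ GraphCat := ⟨fun _ => v, fun _ => Or.inl rfl⟩
    have h := end_unit_comm' cu cv
    have h2 := congrArg (fun k : 𝟙_ GraphCat ⟶ 𝟙_ GraphCat => Hom.toFun k u) h
    exact h2.symm
  obtain ⟨u⟩ := hne
  -- Step 3: build the isomorphism.
  exact ⟨{
    hom := ⟨fun _ => PUnit.unit, fun _ => Or.inl rfl⟩
    inv := ⟨fun _ => u, fun h => h.elim⟩
    hom_inv_id := Hom.ext' (funext fun x => huniq u x)
    inv_hom_id := Hom.ext' (funext fun _ => rfl) }⟩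
end

section
/- For any reflexive graph X, the inclusion of the edge subcategory (ŷ ↓ X)_E — the full subcategory of the comma category ŷ ↓ X spanned by the objects of the form (E, f : ŷ(E) → X) — into ŷ ↓ X is a final functor. -/
open CategoryTheory MonoidalCategory

open GraphCat

/-- The two objects of the category `𝔾`. -/
inductive GObj : Type
  | V : GObj
  | E : GObj

/-- The underlying sets realizing `𝔾` concretely: `V ↦ PUnit` and `E ↦ Bool`. -/
def GFib : GObj → Type
  | .V => PUnit
  | .E => Bool

/-- The category `𝔾`, generated by `s, t : V → E`, `r : E → V`, `σ : E → E` subject to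
`r∘s = r∘t = id`, `σ² = id`, `σ∘s = t`, `σ∘t = s`, `r∘σ = r`; realized concretely as the
full subcategory of `Set` spanned by a one-element set (for `V`) and a two-element set
(for `E`), which satisfies exactly these generators and relations. -/
instance : Category GObj where
  Hom a b := GFib a → GFib b
  id a := fun x => x
  comp f g := fun x => g (f x)
  id_comp _ := rfl
  comp_id _ := rfl
  assoc _ _ _ := rfl

/-- The factorization `ŷ : 𝔾 ⥤ Graph` of the Yoneda embedding through graphs, sending
`V` to `I₀` and `E` to `I₁`. -/
def yHat : GObj ⥤ GraphCat where
  obj a := match a with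
    | .V => I0
    | .E => I1
  map {a b} f := match a, b, f with
    | .V, .V, f => ⟨f, fun {_ _} h => h.elim⟩
    | .V, .E, f => ⟨f, fun {_ _} h => h.elim⟩
    | .E, .V, f => ⟨f, fun {_ _} _ => Or.inl rfl⟩
    | .E, .E, f => ⟨f, fun {v w} _ => eq_or_ne (f v) (f w)⟩
  map_id := by rintro (_ | _) <;> rfl
  map_comp := by rintro (_ | _) (_ | _) (_ | _) f g <;> rfl

/-!
The edge `E` is a retract of every object of `𝔾` (`V` via `s` and `r`). Hence every object
`(a, f)` of `ŷ ↓ X` maps, through the section, to the edge object `(E, ŷ r ≫ f)`, and any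
morphism out of `(a, f)` factors through this one. So each comma category `d ↓ ι` has a weakly
initial object and is therefore connected.
-/

namespace CategoryTheory

theorem isConnected_of_nonempty_hom_from {J : Type*} [Category J] (r : J)
    (h : ∀ j : J, Nonempty (r ⟶ j)) : IsConnected J :=
  have : Nonempty J := ⟨r⟩
  zigzag_isConnected fun j₁ j₂ => (Zigzag.of_inv (h j₁).some).trans (Zigzag.of_hom (h j₂).some)

theorem ObjectProperty.final_ι_of_exists_factorization {C : Type*} [Category C]
    (P : ObjectProperty C)
    (h : ∀ d : C, ∃ (c : C) (_ : P c) (u : d ⟶ c),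
      ∀ (c' : C), P c' → ∀ g : d ⟶ c', ∃ φ : c ⟶ c', u ≫ φ = g) :
    P.ι.Final where
  out d := by
    obtain ⟨c, hc, u, hu⟩ := h d
    refine isConnected_of_nonempty_hom_from
      (StructuredArrow.mk (show d ⟶ P.ι.obj ⟨c, hc⟩ from u)) fun j => ?_
    obtain ⟨φ, hφ⟩ := hu j.right.obj j.right.property j.hom
    exact ⟨StructuredArrow.homMk (ObjectProperty.homMk φ) hφ⟩

namespace CostructuredArrow

variable {A B : Type*} [Category A] [Category B] {F : A ⥤ B} {X : B}

theorem exists_factorization_through_retract {a e : A} (ρ : Retract a e) (f : F.obj a ⟶ X)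
    {c : CostructuredArrow F X} (g : mk f ⟶ c) :
    ∃ φ : mk (F.map ρ.r ≫ f) ⟶ c,
      homMk ρ.i (by simp [← F.map_comp_assoc]) ≫ φ = g := by
  refine ⟨homMk (ρ.r ≫ g.left) (by simp [CostructuredArrow.w g]), ?_⟩
  ext
  simp

theorem final_ι_of_retract (F : A ⥤ B) (X : B) (Q : ObjectProperty A)
    (h : ∀ a : A, ∃ e, Q e ∧ Nonempty (Retract a e)) :
    (ObjectProperty.ι fun c : CostructuredArrow F X => Q c.left).Final := by
  refine ObjectProperty.final_ι_of_exists_factorization _ fun d => ?_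
  obtain ⟨a, ⟨⟩, f⟩ := d
  obtain ⟨e, he, ⟨ρ⟩⟩ := h a
  exact ⟨_, he, _, fun _ _ g => exists_factorization_through_retract ρ f g⟩

end CostructuredArrow

end CategoryTheory

def GObj.retractE : ∀ a : GObj, Retract a GObj.E
  | .V => ⟨fun _ => false, fun _ => PUnit.unit, rfl⟩
  | .E => Retract.refl GObj.E

/-- For any (reflexive) graph `X`, the inclusion of the edge subcategory
`(ŷ ↓ X)_E` — the full subcategory of the comma category `ŷ ↓ X` spanned by objects
of the form `(E, f : ŷ(E) ⟶ X)` — into `ŷ ↓ X` is a final functor. -/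
theorem edge_subcategory_final (X : GraphCat) :
    (ObjectProperty.ι
      (fun c : CostructuredArrow yHat X => c.left = GObj.E)).Final :=
  CostructuredArrow.final_ι_of_retract yHat X (· = GObj.E) fun a => ⟨_, rfl, ⟨a.retractE⟩⟩
end

section
/- If ⊗ is the tensor product of a closed symmetric monoidal structure on the category Graph of reflexive graphs, then the canonical morphism I_1 ⊔ I_1 ≅ (I_0 ⊔ I_0) ⊗ I_1 → I_1 ⊗ I_1 induced by tensoring the endpoint inclusion ∂ : I_0 ⊔ I_0 → I_1 with the identity of I_1 is an epimorphism in Graph. -/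
open CategoryTheory MonoidalCategory

namespace GraphCat

/-- The disjoint union (coproduct) of two graphs. -/
def sumGraph (X Y : GraphCat) : GraphCat where
  V := X.V ⊕ Y.V
  adj p q := match p, q with
    | Sum.inl a, Sum.inl b => X.adj a b
    | Sum.inr a, Sum.inr b => Y.adj a b
    | _, _ => False
  symm := by
    rintro (a | a) (b | b) h
    · exact X.symm h
    · exact h.elim
    · exact h.elim
    · exact Y.symm h
  loopless := by
    rintro (a | a) h
    · exact X.loopless a h
    · exact Y.loopless a h

/-- The endpoint inclusion `∂ : I₀ ⊔ I₀ ⟶ I₁`, sending the two copies of `I₀` to the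
two vertices of `I₁`. -/
def endpoints : sumGraph I0 I0 ⟶ I1 where
  toFun := Sum.elim (fun _ => false) (fun _ => true)
  map_adj := by rintro (a | a) (b | b) h <;> exact h.elim

end GraphCat

open GraphCat

/-! `∂` is surjective on vertices, hence epi, and `- ⊗ I₁` is a left adjoint (to `[I₁, -]`,
using the braiding), so it preserves epimorphisms. -/

namespace GraphCat

theorem epi_of_surjective {X Y : GraphCat} (f : X ⟶ Y) (hf : Function.Surjective f.toFun) :
    Epi f :=
  ⟨fun _ _ H => Hom.ext' <| hf.injective_comp_right <| congrArg (fun k : X ⟶ _ => k.toFun) H⟩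

theorem endpoints_surjective : Function.Surjective endpoints.toFun
  | false => ⟨Sum.inl PUnit.unit, rfl⟩
  | true => ⟨Sum.inr PUnit.unit, rfl⟩

instance : Epi endpoints := epi_of_surjective _ endpoints_surjective

end GraphCat

/-- If `⊗` is the tensor product of a closed symmetric monoidal structure on the
category of (reflexive) graphs, then the canonical morphism
`I₁ ⊔ I₁ ≅ (I₀ ⊔ I₀) ⊗ I₁ ⟶ I₁ ⊗ I₁` obtained by tensoring the endpoint inclusion
`∂ : I₀ ⊔ I₀ ⟶ I₁` with the identity of `I₁` is an epimorphism. -/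
theorem endpoints_tensor_epi [MonoidalCategory GraphCat] [SymmetricCategory GraphCat]
    [MonoidalClosed GraphCat] :
    Epi (endpoints ⊗ₘ 𝟙 I1) := by
  rw [tensorHom_id]
  exact (tensorRight I1).map_epi endpoints
end

section
/- If ⊗ is the tensor product of a closed symmetric monoidal structure on the category Graph of reflexive graphs, then the graph I_1 ⊗ I_1 has at most four vertices. -/
open CategoryTheory MonoidalCategory

open GraphCat

/-- Any function into `I1` is a graph morphism, since any two vertices of `I1`
are equal or adjacent. -/
def GraphCat.homI1Equiv (Z : GraphCat) : (Z ⟶ I1) ≃ (Z.V → Bool) where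
  toFun f := GraphCat.Hom.toFun f
  invFun g := ⟨g, fun {v w} _ => by
    by_cases h : g v = g w
    · exact Or.inl h
    · exact Or.inr h⟩
  left_inv f := Hom.ext' rfl
  right_inv g := rfl

/-- Constant maps are graph morphisms. -/
def GraphCat.constHom (X : GraphCat) {Y : GraphCat} (y : Y.V) : X ⟶ Y :=
  ⟨fun _ => y, fun _ => Or.inl rfl⟩

/-- A morphism out of `I1` is determined by the images of its two vertices. -/
theorem GraphCat.homFromI1_inj (X : GraphCat) :
    Function.Injective (fun f : (I1 ⟶ X) =>
      (GraphCat.Hom.toFun f false, GraphCat.Hom.toFun f true)) := by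
  intro f g h
  apply Hom.ext'
  funext b
  cases b
  · exact congrArg Prod.fst h
  · exact congrArg Prod.snd h

/-- If `⊗` is the tensor product of a closed symmetric monoidal structure on the
category of (reflexive) graphs, then the graph `I₁ ⊗ I₁` has at most four vertices. -/
theorem tensor_I1_I1_at_most_four_vertices [MonoidalCategory GraphCat]
    [SymmetricCategory GraphCat] [MonoidalClosed GraphCat] :
    ∃ f : (I1 ⊗ I1 : GraphCat).V → Fin 4, Function.Injective f := by
  classical
  set I : GraphCat := 𝟙_ GraphCat with hI
  set W : GraphCat := (ihom I1).obj I1 with hW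
  -- curry/uncurry equivalences from the closed structure
  have E1 : (I1 ⊗ I1 ⟶ I1) ≃ (I1 ⟶ W) :=
    ((ihom.adjunction I1).homEquiv I1 I1)
  have E2 : (I1 ⊗ I ⟶ I1) ≃ (I ⟶ W) :=
    ((ihom.adjunction I1).homEquiv I I1)
  have E3 : (I1 ⊗ I ⟶ I1) ≃ (I1 ⟶ I1) := (ρ_ I1).homCongr (Iso.refl I1)
  -- the key equivalence: (I ⟶ W) ≃ (Bool → Bool)
  have EIW : (I ⟶ W) ≃ (Bool → Bool) :=
    (E2.symm.trans E3).trans (homI1Equiv I1)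
  -- the unit has a vertex
  have hu : Nonempty I.V := by
    by_contra h
    have hall : ∀ f g : (I ⟶ W), f = g := by
      intro f g
      apply Hom.ext'
      funext v
      exact absurd ⟨v⟩ h
    have h2 := EIW.symm.injective (a₁ := id) (a₂ := fun _ => true)
      (hall _ _)
    exact Bool.noConfusion (congrFun h2 false)
  obtain ⟨u⟩ := hu
  -- vertices of W embed into Bool → Bool via constant maps
  have jW : Function.Injective (fun w : W.V => EIW (GraphCat.constHom I w)) := by
    intro w w' h
    have := EIW.injective h
    exact congrFun (congrArg GraphCat.Hom.toFun this) u
  -- hence (I1 ⟶ W) embeds into (Bool → Bool) × (Bool → Bool)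
  have jHom : Function.Injective (fun f : (I1 ⟶ W) =>
      (EIW (GraphCat.constHom I (GraphCat.Hom.toFun f false)),
       EIW (GraphCat.constHom I (GraphCat.Hom.toFun f true)))) := by
    intro f g h
    apply homFromI1_inj W
    have h1 := jW (congrArg Prod.fst h)
    have h2 := jW (congrArg Prod.snd h)
    exact Prod.ext h1 h2
  -- compose: functions (I1⊗I1).V → Bool embed into a 16-element type
  set T := (I1 ⊗ I1 : GraphCat).V with hT
  have bigEmb : ∃ e : (T → Bool) → ((Bool → Bool) × (Bool → Bool)),
      Function.Injective e := by
    refine ⟨fun g => (fun f : (I1 ⟶ W) =>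
      (EIW (GraphCat.constHom I (GraphCat.Hom.toFun f false)),
       EIW (GraphCat.constHom I (GraphCat.Hom.toFun f true))))
        (E1 ((homI1Equiv _).symm g)), ?_⟩
    intro g g' h
    exact (homI1Equiv (I1 ⊗ I1)).symm.injective (E1.injective (jHom h))
  obtain ⟨e, he⟩ := bigEmb
  -- T embeds into T → Bool via indicator functions
  have indInj : Function.Injective (fun v : T => (fun w : T => decide (w = v))) := by
    intro v v' h
    have := congrFun h v
    simp at this
    exact this
  -- finiteness and counting
  have hfin1 : Finite (T → Bool) := Finite.of_injective e he
  have hfinT : Finite T := Finite.of_injective _ indInj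
  have : Fintype T := Fintype.ofFinite T
  have hcard : Nat.card (T → Bool) ≤ 16 := by
    have h16 : Nat.card ((Bool → Bool) × (Bool → Bool)) = 16 := by
      simp [Nat.card_eq_fintype_card]
    calc Nat.card (T → Bool) ≤ Nat.card ((Bool → Bool) × (Bool → Bool)) :=
          Nat.card_le_card_of_injective e he
      _ = 16 := h16
  have hcardT : Nat.card T ≤ 4 := by
    have hf : Nat.card (T → Bool) = 2 ^ Nat.card T := by
      rw [Nat.card_fun]
      simp [Nat.card_eq_fintype_card]
    have h2 : (2 : ℕ) ^ Nat.card T ≤ 2 ^ 4 := by omega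
    exact (Nat.pow_le_pow_iff_right (by norm_num)).mp h2
  have hemb : Nonempty (T ↪ Fin 4) := by
    rw [Function.Embedding.nonempty_iff_card_le]
    have h1 : Nat.card T = Fintype.card T := Nat.card_eq_fintype_card
    simp only [Fintype.card_fin]
    omega
  obtain ⟨f⟩ := hemb
  exact ⟨f, f.injective⟩
end

section
/- Let ⊗ be the tensor product of a closed symmetric monoidal structure on the category Graph of reflexive graphs, and for a, a' ∈ {s, t} let (a,a') : I_0 → I_1 ⊗ I_1 denote the composite of the unit isomorphism I_0 ≅ I_0 ⊗ I_0 with a ⊗ a'. Then the four morphisms (s,s), (s,t), (t,s), (t,t) are pairwise distinct; i.e., no vertex of I_1 ⊗ I_1 carries more than one label. -/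
open CategoryTheory MonoidalCategory

namespace GraphCat

/-- The vertex inclusions `s, t : I₀ ⟶ I₁` (`s` for `false`, `t` for `true`). -/
def vert (b : Bool) : I0 ⟶ I1 := ⟨fun _ => b, fun {_ _} h => h.elim⟩

section Labels

variable [MonoidalCategory GraphCat]

/-- Given a monoidal structure on graphs with unit `I₀`, the label morphism
`(a, a') : I₀ ⟶ I₁ ⊗ I₁` for `a, a' ∈ {s, t}` (encoded as booleans, `s = false`,
`t = true`): the composite of the unit isomorphism `I₀ ≅ I₀ ⊗ I₀` with `a ⊗ a'`. -/
def lab (hU : (𝟙_ GraphCat) = I0) (a a' : Bool) : I0 ⟶ (I1 ⊗ I1 : GraphCat) :=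
  eqToHom hU.symm ≫ (λ_ (𝟙_ GraphCat)).inv ≫
    ((eqToHom hU ≫ vert a) ⊗ₘ (eqToHom hU ≫ vert a'))

/-- The vertex of `I₁ ⊗ I₁` labelled `(a, a')`, i.e. the image of the morphism
`lab hU a a'`. -/
def vlab (hU : (𝟙_ GraphCat) = I0) (a a' : Bool) : (I1 ⊗ I1 : GraphCat).V :=
  (lab hU a a').toFun PUnit.unit

end Labels

end GraphCat

open GraphCat

/-!
The unit `I₀` is the terminal graph, so `X ⊗ Y` has projections `X ⊗ Y ⟶ X ⊗ I₀ ≅ X` and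
`X ⊗ Y ⟶ I₀ ⊗ Y ≅ Y` (tensoring with the maps to `I₀`). The projections send the vertex
labelled `(a, a')` to `a` and to `a'` respectively, so the label is determined by the vertex.
-/

open Limits

namespace CategoryTheory.MonoidalCategory

variable {C : Type*} [Category C] [MonoidalCategory C] (hT : IsTerminal (𝟙_ C)) {X Y : C}
include hT

theorem leftUnitor_inv_tensorHom_whiskerLeft_from_rightUnitor (f : 𝟙_ C ⟶ X) (g : 𝟙_ C ⟶ Y) :
    (λ_ (𝟙_ C)).inv ≫ (f ⊗ₘ g) ≫ X ◁ hT.from Y ≫ (ρ_ X).hom = f := by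
  rw [tensorHom_def_assoc, ← whiskerLeft_comp_assoc, hT.hom_ext (g ≫ hT.from Y) (𝟙 _),
    whiskerLeft_id, Category.id_comp, rightUnitor_naturality, ← unitors_equal,
    Iso.inv_hom_id_assoc]

theorem leftUnitor_inv_tensorHom_from_whiskerRight_leftUnitor (f : 𝟙_ C ⟶ X) (g : 𝟙_ C ⟶ Y) :
    (λ_ (𝟙_ C)).inv ≫ (f ⊗ₘ g) ≫ hT.from X ▷ Y ≫ (λ_ Y).hom = g := by
  rw [tensorHom_def'_assoc, ← comp_whiskerRight_assoc, hT.hom_ext (f ≫ hT.from X) (𝟙 _),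
    id_whiskerRight, Category.id_comp, leftUnitor_naturality, Iso.inv_hom_id_assoc]

theorem leftUnitor_inv_tensorHom_injective :
    Function.Injective fun fg : (𝟙_ C ⟶ X) × (𝟙_ C ⟶ Y) => (λ_ (𝟙_ C)).inv ≫ (fg.1 ⊗ₘ fg.2) := by
  rintro ⟨f, g⟩ ⟨f', g'⟩ h
  simp only at h
  refine Prod.ext ?_ ?_
  · rw [← leftUnitor_inv_tensorHom_whiskerLeft_from_rightUnitor hT f g,
      ← leftUnitor_inv_tensorHom_whiskerLeft_from_rightUnitor hT f' g', reassoc_of% h]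
  · rw [← leftUnitor_inv_tensorHom_from_whiskerRight_leftUnitor hT f g,
      ← leftUnitor_inv_tensorHom_from_whiskerRight_leftUnitor hT f' g', reassoc_of% h]

end CategoryTheory.MonoidalCategory

namespace GraphCat

def isTerminalI0 : IsTerminal I0 :=
  IsTerminal.ofUniqueHom (fun _ => ⟨fun _ => PUnit.unit, fun _ => Or.inl rfl⟩)
    fun _ _ => Hom.ext' rfl

theorem vert_injective : Function.Injective vert := fun _ _ h =>
  congrArg (fun f : I0 ⟶ I1 => f.toFun PUnit.unit) h

end GraphCat

theorem labels_injective_general [MonoidalCategory GraphCat] (hU : (𝟙_ GraphCat) = I0) :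
    Function.Injective (fun p : Bool × Bool => lab hU p.1 p.2) := by
  have hT : IsTerminal (𝟙_ GraphCat) := hU ▸ isTerminalI0
  have hvert : Function.Injective fun a => eqToHom hU ≫ vert a := fun a b h =>
    vert_injective ((cancel_epi _).1 h)
  rintro ⟨a, b⟩ ⟨a', b'⟩ h
  have hpair : (eqToHom hU ≫ vert a, eqToHom hU ≫ vert b) =
      (eqToHom hU ≫ vert a', eqToHom hU ≫ vert b') :=
    leftUnitor_inv_tensorHom_injective hT ((cancel_epi (eqToHom hU.symm)).1 h)
  simp only [Prod.mk.injEq] at hpair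
  exact Prod.ext (hvert hpair.1) (hvert hpair.2)

/-- Let `⊗` be the tensor product of a closed symmetric monoidal structure on the
category of (reflexive) graphs (whose unit is necessarily `I₀`).  Then the four label
morphisms `(s,s), (s,t), (t,s), (t,t) : I₀ ⟶ I₁ ⊗ I₁` are pairwise distinct; i.e. no
vertex of `I₁ ⊗ I₁` carries more than one label.  (Here `s = false`, `t = true`.) -/
theorem labels_injective [MonoidalCategory GraphCat] [SymmetricCategory GraphCat]
    [MonoidalClosed GraphCat] (hU : (𝟙_ GraphCat) = I0) :
    Function.Injective (fun p : Bool × Bool => lab hU p.1 p.2) :=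
  labels_injective_general hU
end

section
/- Let ⊗ be the tensor product of a closed symmetric monoidal structure on the category Graph of reflexive graphs. Then I_1 ⊗ I_1 has exactly four vertices, and every vertex of I_1 ⊗ I_1 is the image of exactly one of the four morphisms (s,s), (s,t), (t,s), (t,t) : I_0 → I_1 ⊗ I_1. -/
/-!
Vertices of a graph `X` are the same as points `I₀ ⟶ X`, and points are jointly epimorphic:
every function into the vertices of the complete graph `I₁` is a graph map, so maps into `I₁`
detect single vertices. Since `X ⊗ -` is a left adjoint, the maps `X ◁ y` for points `y` of `Y`
are again jointly epimorphic, hence jointly surjective on vertices; composing with the unitor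
`X ⊗ I₀ ≅ X` shows that every vertex of `X ⊗ Y` is the labelled vertex `(x, y)` for some points
`x`, `y`. Conversely, the projections `X ⊗ Y ⟶ X ⊗ I₀ ≅ X` and `X ⊗ Y ⟶ I₀ ⊗ Y ≅ Y` induced by
the maps to the terminal graph `I₀` recover `x` and `y` from `(x, y)`. So labelling is a bijection
`X.V × Y.V ≃ (X ⊗ Y).V` for all graphs `X`, `Y`, in particular for `I₁ ⊗ I₁`.
-/

open CategoryTheory MonoidalCategory

open GraphCat

namespace GraphCat

def pt {X : GraphCat} (x : X.V) : I0 ⟶ X := ⟨fun _ => x, fun h => h.elim⟩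

theorem pt_comp {X Y : GraphCat} (x : X.V) (f : X ⟶ Y) : pt x ≫ f = pt (f.toFun x) :=
  Hom.ext' rfl

def toI0 (X : GraphCat) : X ⟶ I0 := ⟨fun _ => PUnit.unit, fun _ => Or.inl rfl⟩

@[simp]
theorem pt_comp_toI0 {X : GraphCat} (x : X.V) : pt x ≫ toI0 X = 𝟙 I0 := Hom.ext' rfl

theorem exists_toFun_eq_of_cancel_I1 {ι : Type} {X : ι → GraphCat} {Y : GraphCat}
    (f : ∀ i, X i ⟶ Y) (hf : ∀ g h : Y ⟶ I1, (∀ i, f i ≫ g = f i ≫ h) → g = h)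
    (v : Y.V) : ∃ i u, (f i).toFun u = v := by
  classical
  by_contra! hv
  let indicator : Y ⟶ I1 := ⟨fun w => decide (w = v), fun _ => Classical.em _⟩
  have : (⟨fun _ => false, fun _ => Or.inl rfl⟩ : Y ⟶ I1) = indicator :=
    hf _ _ fun i => Hom.ext' (funext fun u => (decide_eq_false (hv i u)).symm)
  simpa [indicator] using congrArg (fun k : Y ⟶ I1 => k.toFun v) this

section Closed

variable [MonoidalCategory GraphCat] [MonoidalClosed GraphCat]

theorem hom_ext_of_whiskerLeft_pt {X Y Z : GraphCat} {g h : X ⊗ Y ⟶ Z}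
    (hgh : ∀ y : Y.V, X ◁ pt y ≫ g = X ◁ pt y ≫ h) : g = h := by
  apply MonoidalClosed.curry_injective
  refine Hom.ext' (funext fun y => ?_)
  have : pt y ≫ MonoidalClosed.curry g = pt y ≫ MonoidalClosed.curry h := by
    rw [← MonoidalClosed.curry_natural_left, ← MonoidalClosed.curry_natural_left, hgh]
  exact congrArg (fun k : I0 ⟶ _ => k.toFun PUnit.unit) this

theorem exists_whiskerLeft_pt_toFun_eq {X Y : GraphCat} (v : (X ⊗ Y).V) :
    ∃ (y : Y.V) (u : (X ⊗ I0).V), (X ◁ pt y).toFun u = v :=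
  exists_toFun_eq_of_cancel_I1 (fun y : Y.V => X ◁ pt y)
    (fun _ _ => hom_ext_of_whiskerLeft_pt) v

end Closed

section Unit

variable [MonoidalCategory GraphCat] {U : GraphCat} (hU : 𝟙_ GraphCat = U)

def rightUnitorOfEq (X : GraphCat) : X ⊗ U ≅ X :=
  whiskerLeftIso X (eqToIso hU.symm) ≪≫ ρ_ X

def leftUnitorOfEq (X : GraphCat) : U ⊗ X ≅ X :=
  whiskerRightIso (eqToIso hU.symm) X ≪≫ λ_ X

def tensorPoint {X Y : GraphCat} (f : U ⟶ X) (g : U ⟶ Y) : U ⟶ X ⊗ Y :=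
  eqToHom hU.symm ≫ (λ_ (𝟙_ GraphCat)).inv ≫ ((eqToHom hU ≫ f) ⊗ₘ (eqToHom hU ≫ g))

theorem tensorPoint_eq_whiskerLeft {X Y : GraphCat} (f : U ⟶ X) (g : U ⟶ Y) :
    tensorPoint hU f g = f ≫ (rightUnitorOfEq hU X).inv ≫ X ◁ g := by
  subst hU
  simp [tensorPoint, rightUnitorOfEq, MonoidalCategory.tensorHom_def, unitors_inv_equal]

theorem tensorPoint_eq_whiskerRight {X Y : GraphCat} (f : U ⟶ X) (g : U ⟶ Y) :
    tensorPoint hU f g = g ≫ (leftUnitorOfEq hU Y).inv ≫ f ▷ Y := by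
  subst hU
  simp [tensorPoint, leftUnitorOfEq, MonoidalCategory.tensorHom_def']

end Unit

section Vertices

variable [MonoidalCategory GraphCat] (hU : 𝟙_ GraphCat = I0)

def tensorVertex {X Y : GraphCat} (x : X.V) (y : Y.V) : (X ⊗ Y).V :=
  (tensorPoint hU (pt x) (pt y)).toFun PUnit.unit

def tensorFst (X Y : GraphCat) : X ⊗ Y ⟶ X := X ◁ toI0 Y ≫ (rightUnitorOfEq hU X).hom

def tensorSnd (X Y : GraphCat) : X ⊗ Y ⟶ Y := toI0 X ▷ Y ≫ (leftUnitorOfEq hU Y).hom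

theorem tensorFst_tensorVertex {X Y : GraphCat} (x : X.V) (y : Y.V) :
    (tensorFst hU X Y).toFun (tensorVertex hU x y) = x := by
  have : tensorPoint hU (pt x) (pt y) ≫ tensorFst hU X Y = pt x := by
    simp [tensorPoint_eq_whiskerLeft, tensorFst, ← whiskerLeft_comp_assoc]
  exact congrArg (fun k : I0 ⟶ X => k.toFun PUnit.unit) this

theorem tensorSnd_tensorVertex {X Y : GraphCat} (x : X.V) (y : Y.V) :
    (tensorSnd hU X Y).toFun (tensorVertex hU x y) = y := by
  have : tensorPoint hU (pt x) (pt y) ≫ tensorSnd hU X Y = pt y := by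
    simp [tensorPoint_eq_whiskerRight, tensorSnd, ← comp_whiskerRight_assoc]
  exact congrArg (fun k : I0 ⟶ Y => k.toFun PUnit.unit) this

theorem tensorVertex_injective (X Y : GraphCat) :
    Function.Injective (fun p : X.V × Y.V => tensorVertex hU p.1 p.2) := by
  rintro ⟨x, y⟩ ⟨x', y'⟩ (h : tensorVertex hU x y = tensorVertex hU x' y')
  have hx := congrArg (tensorFst hU X Y).toFun h
  have hy := congrArg (tensorSnd hU X Y).toFun h
  simp only [tensorFst_tensorVertex, tensorSnd_tensorVertex] at hx hy
  rw [hx, hy]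

theorem tensorVertex_surjective [MonoidalClosed GraphCat] (X Y : GraphCat) :
    Function.Surjective (fun p : X.V × Y.V => tensorVertex hU p.1 p.2) := by
  intro v
  obtain ⟨y, u, rfl⟩ := exists_whiskerLeft_pt_toFun_eq v
  refine ⟨((rightUnitorOfEq hU X).hom.toFun u, y), ?_⟩
  have : tensorPoint hU (pt ((rightUnitorOfEq hU X).hom.toFun u)) (pt y) = pt u ≫ X ◁ pt y := by
    rw [tensorPoint_eq_whiskerLeft, ← pt_comp, Category.assoc, Iso.hom_inv_id_assoc]
  exact congrArg (fun k : I0 ⟶ _ => k.toFun PUnit.unit) this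

theorem tensorVertex_bijective [MonoidalClosed GraphCat] (X Y : GraphCat) :
    Function.Bijective (fun p : X.V × Y.V => tensorVertex hU p.1 p.2) :=
  ⟨tensorVertex_injective hU X Y, tensorVertex_surjective hU X Y⟩

end Vertices

end GraphCat

-- `vlab hU a a'` unfolds to `tensorVertex hU a a'`.
theorem labels_bijective_general [MonoidalCategory GraphCat]
    [MonoidalClosed GraphCat] (hU : (𝟙_ GraphCat) = I0) :
    Function.Bijective (fun p : Bool × Bool => vlab hU p.1 p.2) :=
  tensorVertex_bijective hU I1 I1

/-- Let `⊗` be the tensor product of a closed symmetric monoidal structure on the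
category of (reflexive) graphs (whose unit is necessarily `I₀`).  Then `I₁ ⊗ I₁` has
exactly four vertices, and every vertex of `I₁ ⊗ I₁` is the image of exactly one of
the four label morphisms `(s,s), (s,t), (t,s), (t,t) : I₀ ⟶ I₁ ⊗ I₁`; that is, the
labelling map `Bool × Bool → (I₁ ⊗ I₁).V` is a bijection. -/
theorem labels_bijective [MonoidalCategory GraphCat] [SymmetricCategory GraphCat]
    [MonoidalClosed GraphCat] (hU : (𝟙_ GraphCat) = I0) :
    Function.Bijective (fun p : Bool × Bool => vlab hU p.1 p.2) :=
  labels_bijective_general hU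
end
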